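/- arXiv:2109.08567 — 5 statements merged into one kernel-verified Lean document; each statement's English description precedes it below -/
import Mathlib

section
/- Binary Golay complementary pairs exist only for even lengths greater than 1: if (a,b) is a pair of {±1}-valued sequences of length N ≥ 2 with A(a)(s)+A(b)(s)=0 for all s ≠ 0, then N is even. -/
open Finset Complex

/-- Extension of a length-`N` sequence to `ℤ` by zero outside `[0, N)`. -/
noncomputable def extSeq (N : ℕ) (d : ℕ → ℂ) : ℤ → ℂ :=
  fun i => if 0 ≤ i ∧ i < (N : ℤ) then d i.toNat else 0

/-- Aperiodic cross-correlation of length-`N` complex sequences at integer shift `s`. -/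
noncomputable def acorr (N : ℕ) (d e : ℕ → ℂ) (s : ℤ) : ℂ :=
  ∑ k ∈ Finset.range N, extSeq N d k * (starRingEnd ℂ) (extSeq N e (k + s))

/-- Aperiodic autocorrelation. -/
noncomputable def aauto (N : ℕ) (e : ℕ → ℂ) (s : ℤ) : ℂ := acorr N e e s

/-- Golay complementary pair of length `N`. -/
def IsGCP (N : ℕ) (a b : ℕ → ℂ) : Prop :=
  ∀ s : ℤ, s ≠ 0 → aauto N a s + aauto N b s = 0

/-!
Write `n = N - 1` and view the sequences as maps into `ℤˣ = {±1}`. A sum of `n` signs is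
congruent mod 4 to `n - 1` plus their product. At shift `1` the two correlations are sums of
`n` signs each, with total `0`, and the products telescope to `a₀ aₙ` and `b₀ bₙ`; at shift `n`
the condition reads `a₀ aₙ + b₀ bₙ = 0`. Hence `0 ≡ 2 (n - 1) [ZMOD 4]`, so `n` is odd.
-/

open ComplexConjugate

lemma extSeq_congr {N : ℕ} {d e : ℕ → ℂ} (h : ∀ k < N, d k = e k) :
    extSeq N d = extSeq N e := by
  funext i
  simp only [extSeq]
  split_ifs with hi
  · exact h _ (by omega)
  · rfl

lemma aauto_congr {N : ℕ} {d e : ℕ → ℂ} (h : ∀ k < N, d k = e k) :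
    aauto N d = aauto N e := by
  funext s
  simp only [aauto, acorr, extSeq_congr h]

lemma isGCP_congr {N : ℕ} {a a' b b' : ℕ → ℂ} (ha : ∀ k < N, a k = a' k)
    (hb : ∀ k < N, b k = b' k) : IsGCP N a b ↔ IsGCP N a' b' := by
  rw [IsGCP, IsGCP, aauto_congr ha, aauto_congr hb]

lemma aauto_natCast (N : ℕ) (e : ℕ → ℂ) {s : ℕ} (hs : s ≤ N) :
    aauto N e s = ∑ k ∈ range (N - s), e k * conj (e (k + s)) := by
  have hext : ∀ i : ℕ, extSeq N e i = if i < N then e i else 0 := fun i => by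
    simp [extSeq]
  rw [aauto, acorr, ← sum_range_add_sum_Ico _ (Nat.sub_le N s)]
  rw [sum_eq_zero (s := Ico (N - s) N) fun k hk => ?_, add_zero]
  · refine sum_congr rfl fun k hk => ?_
    rw [mem_range] at hk
    rw [← Nat.cast_add, hext, hext, if_pos (by omega), if_pos (by omega)]
  · rw [mem_Ico] at hk
    rw [← Nat.cast_add, hext (k + s), if_neg (by omega), map_zero, mul_zero]

lemma aauto_intCast_natCast (N : ℕ) (x : ℕ → ℤ) {s : ℕ} (hs : s ≤ N) :
    aauto N (fun k => (x k : ℂ)) s = ((∑ k ∈ range (N - s), x k * x (k + s) : ℤ) : ℂ) := by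
  rw [aauto_natCast N _ hs]
  push_cast
  simp only [map_intCast]

lemma exists_units_of_eq_one_or_eq_neg_one {N : ℕ} {a : ℕ → ℂ}
    (ha : ∀ k < N, a k = 1 ∨ a k = -1) : ∃ x : ℕ → ℤˣ, ∀ k < N, a k = ((x k : ℤ) : ℂ) := by
  classical
  refine ⟨fun k => if a k = 1 then 1 else -1, fun k hk => ?_⟩
  rcases ha k hk with h | h <;> norm_num [h]

lemma sum_units_modEq_four (u : ℕ → ℤˣ) (n : ℕ) :
    ∑ i ∈ range n, (u i : ℤ) ≡ n - 1 + ((∏ i ∈ range n, u i : ℤˣ) : ℤ) [ZMOD 4] := by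
  induction n with
  | zero => rfl
  | succ n ih =>
    rw [sum_range_succ, prod_range_succ, Units.val_mul]
    -- the error term `(1 - p) * (1 - u n)` is a product of two elements of `{0, 2}`
    have hstep : n - 1 + ((∏ i ∈ range n, u i : ℤˣ) : ℤ) + u n
        ≡ (n + 1 : ℕ) - 1 + (∏ i ∈ range n, u i : ℤˣ) * u n [ZMOD 4] := by
      rcases Int.units_eq_one_or (∏ i ∈ range n, u i) with hp | hp <;>
        rcases Int.units_eq_one_or (u n) with hu | hu <;>
        · simp only [hp, hu, Units.val_one, Units.val_neg, Int.ModEq]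
          push_cast
          omega
    exact (ih.add_right _).trans hstep

lemma prod_range_units_mul_succ (x : ℕ → ℤˣ) (n : ℕ) :
    ∏ i ∈ range n, x i * x (i + 1) = x 0 * x n := by
  have hdiv : ∀ i, x i * x (i + 1) = x (i + 1) / x i := fun i => by
    rw [div_eq_mul_inv, Int.units_inv_eq_self, mul_comm]
  rw [prod_congr rfl fun i _ => hdiv i, prod_range_div, div_eq_mul_inv, Int.units_inv_eq_self,
    mul_comm]

lemma IsGCP.sum_units_mul_add_sum_units_mul {N : ℕ} {x y : ℕ → ℤˣ}
    (h : IsGCP N (fun k => ((x k : ℤ) : ℂ)) (fun k => ((y k : ℤ) : ℂ))) {s : ℕ} (hs : s ≤ N)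
    (hs0 : s ≠ 0) :
    ∑ k ∈ range (N - s), ((x k * x (k + s) : ℤˣ) : ℤ)
      + ∑ k ∈ range (N - s), ((y k * y (k + s) : ℤˣ) : ℤ) = 0 := by
  have := h s (by exact_mod_cast hs0)
  rw [aauto_intCast_natCast _ _ hs, aauto_intCast_natCast _ _ hs] at this
  exact_mod_cast this

lemma IsGCP.even_of_units {N : ℕ} {x y : ℕ → ℤˣ} (hN : 2 ≤ N)
    (h : IsGCP N (fun k => ((x k : ℤ) : ℂ)) (fun k => ((y k : ℤ) : ℂ))) : Even N := by
  obtain ⟨n, rfl⟩ : ∃ n, N = n + 1 := ⟨N - 1, by omega⟩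
  have hshift_one := h.sum_units_mul_add_sum_units_mul (s := 1) (by omega) one_ne_zero
  rw [Nat.add_sub_cancel] at hshift_one
  have hshift_last := h.sum_units_mul_add_sum_units_mul (s := n) (by omega) (by omega)
  rw [Nat.add_sub_cancel_left, sum_range_one, sum_range_one, zero_add] at hshift_last
  have hmod := (sum_units_modEq_four (fun k => x k * x (k + 1)) n).add
    (sum_units_modEq_four (fun k => y k * y (k + 1)) n)
  rw [hshift_one, prod_range_units_mul_succ, prod_range_units_mul_succ] at hmod
  rw [Nat.even_iff]
  simp only [Int.ModEq] at hmod
  omega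

/-- binary GCPs exist only for even lengths (for `N ≥ 2`). -/
theorem binary_gcp_even_length (N : ℕ) (hN : 2 ≤ N) (a b : ℕ → ℂ)
    (ha : ∀ k < N, a k = 1 ∨ a k = -1)
    (hb : ∀ k < N, b k = 1 ∨ b k = -1)
    (h : IsGCP N a b) :
    Even N := by
  obtain ⟨x, hx⟩ := exists_units_of_eq_one_or_eq_neg_one ha
  obtain ⟨y, hy⟩ := exists_units_of_eq_one_or_eq_neg_one hb
  exact IsGCP.even_of_units hN ((isGCP_congr hx hy).mp h)
end

section
/- Davis–Jedwab Golay pair construction (binary case): Let m ≥ 2, π a permutation of {0,...,m-1}, and c_0,...,c_{m-1}, c ∈ Z_2. Define f : {0,1}^m → Z_2 by f(y) = sum_{α=0}^{m-2} y_{π(α)} y_{π(α+1)} + sum_{α=0}^{m-1} c_α y_α + c. Then the length-2^m sequences a, b defined by a_i = (-1)^{f(i_0,...,i_{m-1})} and b_i = (-1)^{f(i_0,...,i_{m-1}) + i_{π(0)}} form a Golay complementary pair: A(a)(s) + A(b)(s) = 0 for all s ≠ 0. -/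
open Finset Complex

/-- Binary representation of `i` as a `ZMod 2`-valued vector of length `m`. -/
def bitsZ (m i : ℕ) : Fin m → ZMod 2 := fun j => if i.testBit j then 1 else 0

/-!
Write `j = k + s`. As `b i = a i * (-1) ^ i_{π 0}`, the pair `(k, j)` contributes
`a k a j + b k b j`, which is `0` if `k` and `j` differ in bit `π 0` and `2 (-1) ^ (f k + f j)`
otherwise. In that case let `π v` be the first position along the path `π` where `k` and `j`
differ (so `v ≥ 1`) and flip bit `π (v - 1)` in both. This keeps `j - k`, since the two flipped
bits agree; it is an involution, since it does not change `k ^^^ j`; and it changes `f k + f j`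
by the sum of the bits of `k ^^^ j` at the path neighbours `π v` and `π (v - 2)`, that is, by
`1 + 0`. So the surviving terms cancel in pairs.
-/

open ComplexConjugate

theorem Nat.xor_two_pow_eq (n q : ℕ) : n ^^^ 2 ^ q = 2 ^ q * (n / 2 ^ q ^^^ 1) + n % 2 ^ q := by
  conv_lhs => rw [← Nat.div_add_mod (n ^^^ 2 ^ q) (2 ^ q)]
  rw [Nat.xor_div_two_pow, Nat.xor_mod_two_pow, Nat.div_self (Nat.two_pow_pos q), Nat.mod_self,
    Nat.xor_zero]

theorem Nat.xor_one_add_two_mul_mod_two (x : ℕ) : (x ^^^ 1) + 2 * (x % 2) = x + 1 := by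
  rcases Nat.even_or_odd x with h | h
  · rw [Nat.xor_one_of_even h, Nat.even_iff.mp h]
  · rw [Nat.xor_one_of_odd h, Nat.odd_iff.mp h]
    have := h.pos
    omega

theorem Nat.cast_xor_two_pow_sub_cast_xor_two_pow {k j q : ℕ} (h : k.testBit q = j.testBit q) :
    ((j ^^^ 2 ^ q : ℕ) : ℤ) - (k ^^^ 2 ^ q : ℕ) = j - k := by
  have hpar : k / 2 ^ q % 2 = j / 2 ^ q % 2 := by
    simp only [Nat.testBit_eq_decide_div_mod_eq, decide_eq_decide] at h
    omega
  have hxor : ((j / 2 ^ q ^^^ 1 : ℕ) : ℤ) - (k / 2 ^ q ^^^ 1 : ℕ) =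
      ↑(j / 2 ^ q) - ↑(k / 2 ^ q) := by
    have := Nat.xor_one_add_two_mul_mod_two (k / 2 ^ q)
    have := Nat.xor_one_add_two_mul_mod_two (j / 2 ^ q)
    omega
  conv_rhs => rw [← Nat.div_add_mod k (2 ^ q), ← Nat.div_add_mod j (2 ^ q)]
  rw [Nat.xor_two_pow_eq, Nat.xor_two_pow_eq]
  simp only [Nat.cast_add, Nat.cast_mul, Nat.cast_pow, Nat.cast_ofNat]
  linear_combination (2 : ℤ) ^ q * hxor

theorem Nat.xor_xor_xor_cancel (k j x : ℕ) : (k ^^^ x) ^^^ (j ^^^ x) = k ^^^ j := by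
  rw [Nat.xor_assoc, Nat.xor_comm j, ← Nat.xor_assoc x, Nat.xor_self, Nat.zero_xor]

theorem ZMod.neg_one_pow_val_add {R : Type*} [Ring R] (x y : ZMod 2) :
    (-1 : R) ^ (x + y).val = (-1) ^ x.val * (-1) ^ y.val := by
  rw [ZMod.val_add, ← neg_one_pow_eq_pow_mod_two, pow_add]

theorem bitsZ_xor (m k j : ℕ) : bitsZ m (k ^^^ j) = bitsZ m k + bitsZ m j := by
  funext α
  simp only [bitsZ, Pi.add_apply, Nat.testBit_xor]
  cases k.testBit α <;> cases j.testBit α <;> decide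

theorem bitsZ_two_pow {m : ℕ} (q : Fin m) : bitsZ m (2 ^ (q : ℕ)) = Pi.single q 1 := by
  funext α
  simp [bitsZ, Nat.testBit_two_pow, Pi.single_apply, Fin.val_inj, eq_comm]

theorem Finset.sum_range_add_single_mul_add_single {R : Type*} [CommRing R] (g : ℕ → R)
    {M t : ℕ} (ht : t < M) :
    ∑ p ∈ range M, (g + Pi.single t 1 : ℕ → R) p * (g + Pi.single t 1 : ℕ → R) (p + 1) =
      ∑ p ∈ range M, g p * g (p + 1) + g (t + 1) + if 1 ≤ t then g (t - 1) else 0 := by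
  have hexpand : ∀ p,
      (g + Pi.single t 1 : ℕ → R) p * (g + Pi.single t 1 : ℕ → R) (p + 1) =
        g p * g (p + 1) + (if p = t then g (p + 1) else 0) + if p + 1 = t then g p else 0 := by
    intro p
    simp only [Pi.add_apply, Pi.single_apply]
    split_ifs <;> first | omega | ring
  have hprev :
      (∑ p ∈ range M, if p + 1 = t then g p else 0) = if 1 ≤ t then g (t - 1) else 0 := by
    rcases t with _ | t
    · simp
    · simp [sum_ite_eq', show t < M by omega]
  simp only [hexpand, sum_add_distrib, sum_ite_eq', mem_range, ht, if_true, hprev]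

def shiftPairs (N : ℕ) (s : ℤ) : Finset (ℕ × ℕ) :=
  (range N ×ˢ range N).filter fun p => (p.2 : ℤ) = p.1 + s

theorem acorr_eq_sum_shiftPairs (N : ℕ) (d e : ℕ → ℂ) (s : ℤ) :
    acorr N d e s = ∑ p ∈ shiftPairs N s, d p.1 * conj (e p.2) := by
  rw [acorr, shiftPairs, sum_filter, sum_product]
  refine sum_congr rfl fun k hk => ?_
  have hk : k < N := mem_range.mp hk
  rw [extSeq, if_pos ⟨by positivity, by exact_mod_cast hk⟩, Int.toNat_natCast]
  by_cases hwin : 0 ≤ (k : ℤ) + s ∧ (k : ℤ) + s < N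
  · have hj : ∀ j : ℕ, (j : ℤ) = k + s ↔ j = ((k : ℤ) + s).toNat := by omega
    simp only [hj, sum_ite_eq', mem_range, extSeq, if_pos hwin]
    rw [if_pos (by omega)]
  · rw [extSeq, if_neg hwin, map_zero, mul_zero]
    refine (sum_eq_zero fun j hj => if_neg fun h => hwin ?_).symm
    have := mem_range.mp hj
    omega

theorem mem_shiftPairs {N : ℕ} {s : ℤ} {p : ℕ × ℕ} :
    p ∈ shiftPairs N s ↔ p.1 < N ∧ p.2 < N ∧ (p.2 : ℤ) = p.1 + s := by
  simp [shiftPairs, and_assoc]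

theorem xor_two_pow_mem_shiftPairs {m q : ℕ} {s : ℤ} {p : ℕ × ℕ}
    (hp : p ∈ shiftPairs (2 ^ m) s) (hq : q < m) (hbit : p.1.testBit q = p.2.testBit q) :
    (p.1 ^^^ 2 ^ q, p.2 ^^^ 2 ^ q) ∈ shiftPairs (2 ^ m) s := by
  obtain ⟨hk, hj, hkj⟩ := mem_shiftPairs.mp hp
  have hqm : 2 ^ q < 2 ^ m := Nat.pow_lt_pow_right one_lt_two hq
  have := Nat.cast_xor_two_pow_sub_cast_xor_two_pow hbit
  exact mem_shiftPairs.mpr ⟨Nat.xor_lt_two_pow hk hqm, Nat.xor_lt_two_pow hj hqm, by omega⟩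

section Path

variable {m : ℕ} (π : Equiv.Perm (Fin m)) {R : Type*} [CommRing R]

def alongPath (y : Fin m → R) (p : ℕ) : R := if h : p < m then y (π ⟨p, h⟩) else 0

def pathSum (y : Fin m → R) : R :=
  ∑ p ∈ range (m - 1), alongPath π y p * alongPath π y (p + 1)

theorem sum_fin_eq_pathSum (hmm : m - 1 + 1 = m) (y : Fin m → R) :
    ∑ α : Fin (m - 1), y (π (Fin.cast hmm α.castSucc)) * y (π (Fin.cast hmm α.succ)) =
      pathSum π y := by
  rw [pathSum, ← Fin.sum_univ_eq_sum_range]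
  refine sum_congr rfl fun α _ => ?_
  rw [alongPath, alongPath, dif_pos (by omega), dif_pos (by omega)]
  rfl

theorem alongPath_add_single (y : Fin m → R) {t : ℕ} (ht : t < m) :
    alongPath π (y + Pi.single (π ⟨t, ht⟩) 1) = alongPath π y + Pi.single t 1 := by
  funext p
  by_cases hp : p < m
  · simp [alongPath, hp, Pi.single_apply, Fin.ext_iff]
  · have : p ≠ t := by omega
    simp [alongPath, hp, this]

theorem pathSum_add_single (y : Fin m → R) {t : ℕ} (ht : t + 1 < m) :
    pathSum π (y + Pi.single (π ⟨t, by omega⟩) 1) =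
      pathSum π y + alongPath π y (t + 1) + if 1 ≤ t then alongPath π y (t - 1) else 0 := by
  rw [pathSum, alongPath_add_single, sum_range_add_single_mul_add_single _ (by omega), pathSum]

theorem apply_add_single_add_apply_add_single (c : Fin m → ZMod 2) (c' : ZMod 2)
    (f : (Fin m → ZMod 2) → ZMod 2)
    (hf : ∀ y, f y = pathSum π y + ∑ α, c α * y α + c') (y z : Fin m → ZMod 2) {t : ℕ}
    (ht : t + 1 < m) (hnext : alongPath π (y + z) (t + 1) = 1)
    (hprev : 1 ≤ t → alongPath π (y + z) (t - 1) = 0) :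
    f (y + Pi.single (π ⟨t, by omega⟩) 1) + f (z + Pi.single (π ⟨t, by omega⟩) 1) =
      f y + f z + 1 := by
  have hlin : ∀ (x : Fin m → ZMod 2) (q : Fin m),
      ∑ α, c α * (x + Pi.single q 1 : Fin m → ZMod 2) α = ∑ α, c α * x α + c q := by
    intro x q
    simp [mul_add, sum_add_distrib, Pi.single_apply]
  have hadd : ∀ p, alongPath π (y + z) p = alongPath π y p + alongPath π z p := by
    intro p
    unfold alongPath
    split_ifs <;> simp
  rw [hadd] at hnext
  simp only [hadd] at hprev
  rw [hf, hf, hf, hf, pathSum_add_single π _ ht, pathSum_add_single π _ ht, hlin, hlin]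
  split_ifs with h1
  · linear_combination hnext + hprev h1 + CharTwo.add_self_eq_zero (c (π ⟨t, by omega⟩))
  · linear_combination hnext + CharTwo.add_self_eq_zero (c (π ⟨t, by omega⟩))

noncomputable def pathPivot (d : ℕ) : ℕ :=
  sInf {t | alongPath π (bitsZ m d) (t + 1) = 1}

theorem pathPivot_spec (h0 : 0 < m) {d : ℕ} (hd : d ≠ 0) (hdm : d < 2 ^ m)
    (hd0 : bitsZ m d (π ⟨0, h0⟩) = 0) :
    pathPivot π d + 1 < m ∧ alongPath π (bitsZ m d) (pathPivot π d + 1) = 1 ∧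
      ∀ p ≤ pathPivot π d, alongPath π (bitsZ m d) p = 0 := by
  have hbit : ∀ x : ZMod 2, x ≠ 1 → x = 0 := by decide
  obtain ⟨i, hi⟩ := Nat.exists_testBit_of_ne_zero hd
  have him : i < m := by
    by_contra h
    rw [Nat.testBit_lt_two_pow (hdm.trans_le (Nat.pow_le_pow_right two_pos (not_lt.mp h)))] at hi
    exact Bool.false_ne_true hi
  set v := π.symm ⟨i, him⟩
  have hv : alongPath π (bitsZ m d) v = 1 := by simp [alongPath, v, bitsZ, hi]
  have hv0 : (v : ℕ) ≠ 0 := by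
    intro h
    rw [h, alongPath, dif_pos h0, hd0] at hv
    exact zero_ne_one hv
  have hmem := Nat.sInf_mem (s := {t | alongPath π (bitsZ m d) (t + 1) = 1})
    ⟨v - 1, by simpa [Nat.sub_add_cancel (Nat.pos_of_ne_zero hv0)] using hv⟩
  have hlt : pathPivot π d + 1 < m := by
    by_contra h
    have : alongPath π (bitsZ m d) (pathPivot π d + 1) = 0 := dif_neg h
    exact zero_ne_one (this.symm.trans hmem)
  refine ⟨hlt, hmem, fun p hp => ?_⟩
  rcases p with _ | p
  · rwa [alongPath, dif_pos h0]
  · exact hbit _ (Nat.notMem_of_lt_sInf (show p < pathPivot π d by omega))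

theorem testBit_eq_of_alongPath_bitsZ_xor_eq_zero {k j t : ℕ} (ht : t < m)
    (h : alongPath π (bitsZ m (k ^^^ j)) t = 0) :
    k.testBit (π ⟨t, ht⟩) = j.testBit (π ⟨t, ht⟩) := by
  rw [alongPath, dif_pos ht, bitsZ] at h
  split_ifs at h with hx
  · exact absurd h one_ne_zero
  · simpa using hx

theorem sum_shiftPairs_eq_zero_of_flip {M : Type*} [AddCommGroup M] (h0 : 0 < m) {s : ℤ}
    (hs : s ≠ 0) (G : ℕ → ℕ → M)
    (hG0 : ∀ k j, bitsZ m (k ^^^ j) (π ⟨0, h0⟩) = 1 → G k j = 0)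
    (hG : ∀ k j t (ht : t + 1 < m), alongPath π (bitsZ m (k ^^^ j)) (t + 1) = 1 →
      (∀ p ≤ t, alongPath π (bitsZ m (k ^^^ j)) p = 0) →
      G (k ^^^ 2 ^ (π ⟨t, by omega⟩ : ℕ)) (j ^^^ 2 ^ (π ⟨t, by omega⟩ : ℕ)) =
        -G k j) :
    ∑ p ∈ shiftPairs (2 ^ m) s, G p.1 p.2 = 0 := by
  have hbit : ∀ x : ZMod 2, x ≠ 0 → x = 1 := by decide
  set S := (shiftPairs (2 ^ m) s).filter fun p => bitsZ m (p.1 ^^^ p.2) (π ⟨0, h0⟩) = 0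
  have hsupp : ∑ p ∈ S, G p.1 p.2 = ∑ p ∈ shiftPairs (2 ^ m) s, G p.1 p.2 :=
    sum_filter_of_ne fun p _ hp => by_contra fun h => hp (hG0 _ _ (hbit _ h))
  rw [← hsupp]
  have hspec : ∀ p ∈ S, pathPivot π (p.1 ^^^ p.2) + 1 < m ∧
      alongPath π (bitsZ m (p.1 ^^^ p.2)) (pathPivot π (p.1 ^^^ p.2) + 1) = 1 ∧
      ∀ i ≤ pathPivot π (p.1 ^^^ p.2), alongPath π (bitsZ m (p.1 ^^^ p.2)) i = 0 := by
    intro p hp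
    obtain ⟨hp, hp0⟩ := mem_filter.mp hp
    obtain ⟨hk, hj, hkj⟩ := mem_shiftPairs.mp hp
    exact pathPivot_spec π h0 (by rw [Ne, Nat.xor_eq_zero_iff]; omega) (Nat.xor_lt_two_pow hk hj)
      hp0
  let q : ∀ p ∈ S, Fin m := fun p hp =>
    π ⟨pathPivot π (p.1 ^^^ p.2), Nat.lt_of_succ_lt (hspec p hp).1⟩
  refine sum_involution (fun p hp => (p.1 ^^^ 2 ^ (q p hp : ℕ), p.2 ^^^ 2 ^ (q p hp : ℕ)))
    (fun p hp => ?_) (fun p hp _ => ?_) (fun p hp => ?_) (fun p hp => ?_)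
  · obtain ⟨h1, h2, h3⟩ := hspec p hp
    rw [hG _ _ _ h1 h2 h3, add_neg_cancel]
  · intro h
    have h1 : p.1 ^^^ 2 ^ (q p hp : ℕ) = p.1 ^^^ 0 := by
      rw [Nat.xor_zero]
      exact congrArg Prod.fst h
    exact (Nat.two_pow_pos _).ne' (Nat.xor_right_injective h1)
  · obtain ⟨hp', hp0⟩ := mem_filter.mp hp
    refine mem_filter.mpr ⟨xor_two_pow_mem_shiftPairs hp' (q p hp).isLt ?_, ?_⟩
    · exact testBit_eq_of_alongPath_bitsZ_xor_eq_zero π _ ((hspec p hp).2.2 _ le_rfl)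
    · rwa [Nat.xor_xor_xor_cancel]
  · simp only [q, Nat.xor_xor_xor_cancel, Nat.xor_xor_cancel_right]

end Path

theorem neg_one_pow_mul_conj_add_neg_one_pow_mul_conj (x y u v : ZMod 2) :
    (-1 : ℂ) ^ x.val * conj ((-1 : ℂ) ^ y.val) +
        (-1 : ℂ) ^ (x + u).val * conj ((-1 : ℂ) ^ (y + v).val) =
      (-1) ^ (x + y).val * (1 + (-1) ^ (u + v).val) := by
  have hconj : ∀ n : ℕ, conj ((-1 : ℂ) ^ n) = (-1) ^ n := fun n => by simp
  simp only [ZMod.neg_one_pow_val_add, map_mul, hconj]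
  ring

/-- Davis–Jedwab Golay pair construction, binary case. -/
theorem davis_jedwab_binary (m : ℕ) (hm : 2 ≤ m) (hmm : m - 1 + 1 = m)
    (π : Equiv.Perm (Fin m)) (c : Fin m → ZMod 2) (c' : ZMod 2)
    (f : (Fin m → ZMod 2) → ZMod 2)
    (hf : ∀ y : Fin m → ZMod 2,
      f y = (∑ α : Fin (m - 1),
              y (π (Fin.cast hmm α.castSucc)) * y (π (Fin.cast hmm α.succ))) +
            (∑ α : Fin m, c α * y α) + c')
    (a b : ℕ → ℂ)
    (hA : ∀ i, a i = (-1 : ℂ) ^ (f (bitsZ m i)).val)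
    (hB : ∀ i, b i = (-1 : ℂ) ^ (f (bitsZ m i) + bitsZ m i (π ⟨0, by omega⟩)).val) :
    IsGCP (2 ^ m) a b := by
  have h0 : 0 < m := by omega
  have hf' : ∀ y, f y = pathSum π y + ∑ α, c α * y α + c' := fun y => by
    rw [hf, sum_fin_eq_pathSum]
  have hterm : ∀ k j, a k * conj (a j) + b k * conj (b j) =
      (-1) ^ (f (bitsZ m k) + f (bitsZ m j)).val *
        (1 + (-1) ^ (bitsZ m (k ^^^ j) (π ⟨0, h0⟩)).val) := fun k j => by
    rw [hA, hA, hB, hB, neg_one_pow_mul_conj_add_neg_one_pow_mul_conj, bitsZ_xor, Pi.add_apply]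
  have hval_one : (1 : ZMod 2).val = 1 := rfl
  intro s hs
  rw [aauto, aauto, acorr_eq_sum_shiftPairs, acorr_eq_sum_shiftPairs, ← sum_add_distrib]
  refine sum_shiftPairs_eq_zero_of_flip π h0 hs (fun k j => a k * conj (a j) + b k * conj (b j))
    (fun k j hkj => ?_) (fun k j t ht hnext hprev => ?_)
  · rw [hterm, hkj, hval_one]
    ring
  · have hflip := apply_add_single_add_apply_add_single π c c' f hf' (bitsZ m k) (bitsZ m j) ht
      (by rwa [← bitsZ_xor]) (fun _ => by rw [← bitsZ_xor]; exact hprev _ (by omega))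
    rw [hterm, hterm, Nat.xor_xor_xor_cancel, bitsZ_xor m k, bitsZ_xor m j, bitsZ_two_pow, hflip,
      ZMod.neg_one_pow_val_add, hval_one]
    ring
end

section
/- Concatenation construction: if (a,b) is a Golay complementary pair of length N, then the pair (a|b, a|(-b)) of length 2N, where | denotes concatenation, is also a Golay complementary pair. -/
open Finset Complex

lemma ext_zero_ge (N : ℕ) (d : ℕ → ℂ) (i : ℤ) (h : (N:ℤ) ≤ i) : extSeq N d i = 0 := by
  unfold extSeq; split_ifs with h'
  · omega
  · rfl

lemma ext_zero_lt (N : ℕ) (d : ℕ → ℂ) (i : ℤ) (h : i < 0) : extSeq N d i = 0 := by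
  unfold extSeq; split_ifs with h'
  · omega
  · rfl

lemma ext_split (N : ℕ) (a b : ℕ → ℂ) (i : ℤ) :
    extSeq (2*N) (fun i => if i < N then a i else b (i-N)) i
      = extSeq N a i + extSeq N b (i - N) := by
  unfold extSeq
  push_cast
  split_ifs <;>
    first
      | omega
      | simp
      | (rw [zero_add]; congr 1; omega)

lemma ext_neg (N : ℕ) (b : ℕ → ℂ) (i : ℤ) :
    extSeq N (fun n => -b n) i = -(extSeq N b i) := by
  unfold extSeq; split_ifs <;> simp

lemma ext_splitm (N : ℕ) (a b : ℕ → ℂ) (i : ℤ) :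
    extSeq (2*N) (fun i => if i < N then a i else -b (i-N)) i
      = extSeq N a i - extSeq N b (i - N) := by
  have := ext_split N a (fun n => -b n) i
  simp only [ext_neg] at this
  rw [sub_eq_add_neg]
  exact this

/-- concatenation construction `(a|b, a|(-b))` of a GCP of length `N`
is a GCP of length `2N`. -/
theorem gcp_concat (N : ℕ) (a b : ℕ → ℂ) (h : IsGCP N a b) :
    IsGCP (2 * N) (fun i => if i < N then a i else b (i - N))
      (fun i => if i < N then a i else -b (i - N)) := by
  intro s hs
  have hab := h s hs
  simp only [aauto, acorr] at hab ⊢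
  rw [← Finset.sum_add_distrib]
  have key : ∀ k ∈ Finset.range (2*N),
      (extSeq (2*N) (fun i => if i < N then a i else b (i-N)) k *
        (starRingEnd ℂ) (extSeq (2*N) (fun i => if i < N then a i else b (i-N)) (k + s)) +
       extSeq (2*N) (fun i => if i < N then a i else -b (i-N)) k *
        (starRingEnd ℂ) (extSeq (2*N) (fun i => if i < N then a i else -b (i-N)) (k + s)))
      = 2 * (extSeq N a k * (starRingEnd ℂ) (extSeq N a (k + s)))
        + 2 * (extSeq N b ((k:ℤ) - N) * (starRingEnd ℂ) (extSeq N b ((k:ℤ) + s - N))) := by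
    intro k _
    rw [ext_split, ext_split, ext_splitm, ext_splitm, map_add, map_sub]
    ring
  rw [Finset.sum_congr rfl key, Finset.sum_add_distrib]
  have hA : ∑ k ∈ Finset.range (2*N),
      2 * (extSeq N a k * (starRingEnd ℂ) (extSeq N a (k + s)))
      = 2 * ∑ k ∈ Finset.range N, extSeq N a k * (starRingEnd ℂ) (extSeq N a (k + s)) := by
    rw [two_mul N, Finset.sum_range_add, Finset.mul_sum]
    have : ∀ j ∈ Finset.range N,
        2 * (extSeq N a ((N + j : ℕ)) * (starRingEnd ℂ) (extSeq N a ((N + j : ℕ) + s))) = 0 := by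
      intro j _
      rw [ext_zero_ge N a _ (by push_cast; omega)]
      ring
    rw [Finset.sum_congr rfl this, Finset.sum_const_zero, add_zero]
  have hB : ∑ k ∈ Finset.range (2*N),
      2 * (extSeq N b ((k:ℤ) - N) * (starRingEnd ℂ) (extSeq N b ((k:ℤ) + s - N)))
      = 2 * ∑ k ∈ Finset.range N, extSeq N b k * (starRingEnd ℂ) (extSeq N b (k + s)) := by
    rw [two_mul N, Finset.sum_range_add, Finset.mul_sum]
    have h1 : ∀ k ∈ Finset.range N,
        2 * (extSeq N b ((k:ℤ) - N) * (starRingEnd ℂ) (extSeq N b ((k:ℤ) + s - N))) = 0 := by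
      intro k hk
      rw [ext_zero_lt N b _ (by simp at hk; omega)]
      ring
    rw [Finset.sum_congr rfl h1, Finset.sum_const_zero, zero_add]
    apply Finset.sum_congr rfl
    intro j _
    have e1 : ((N + j : ℕ) : ℤ) - N = (j : ℤ) := by push_cast; ring
    have e2 : ((N + j : ℕ) : ℤ) + s - N = (j : ℤ) + s := by push_cast; ring
    rw [e1, e2]
  rw [hA, hB, ← mul_add, hab, mul_zero]
end

section
/- Interleaving construction: if (a,b) is a Golay complementary pair of length N, then the interleaved pair (c,d) of length 2N defined by c_{2k}=a_k, c_{2k+1}=b_k, d_{2k}=a_k, d_{2k+1}=-b_k is also a Golay complementary pair. -/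
open Finset Complex

lemma sum_range_two_mul (N : ℕ) (f : ℕ → ℂ) :
    ∑ k ∈ Finset.range (2 * N), f k = ∑ j ∈ Finset.range N, (f (2 * j) + f (2 * j + 1)) := by
  induction N with
  | zero => simp
  | succ n ih =>
    have h2 : 2 * (n + 1) = (2 * n + 1) + 1 := by ring
    rw [h2, Finset.sum_range_succ, Finset.sum_range_succ, ih, Finset.sum_range_succ]
    ring

lemma extSeq_interleave_even (N : ℕ) (a b : ℕ → ℂ) (m : ℤ) :
    extSeq (2 * N) (fun i => if i % 2 = 0 then a (i / 2) else b (i / 2)) (2 * m)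
      = extSeq N a m := by
  unfold extSeq
  by_cases h : 0 ≤ m ∧ m < (N : ℤ)
  · have h1 : 0 ≤ 2 * m ∧ 2 * m < ((2 * N : ℕ) : ℤ) := by push_cast; omega
    rw [if_pos h1, if_pos h]
    have ht1 : (2 * m).toNat % 2 = 0 := by omega
    have ht2 : (2 * m).toNat / 2 = m.toNat := by omega
    simp [ht1, ht2]
  · rw [if_neg, if_neg h]
    push_cast; omega

lemma extSeq_interleave_odd (N : ℕ) (a b : ℕ → ℂ) (m : ℤ) :
    extSeq (2 * N) (fun i => if i % 2 = 0 then a (i / 2) else b (i / 2)) (2 * m + 1)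
      = extSeq N b m := by
  unfold extSeq
  by_cases h : 0 ≤ m ∧ m < (N : ℤ)
  · have h1 : 0 ≤ 2 * m + 1 ∧ 2 * m + 1 < ((2 * N : ℕ) : ℤ) := by push_cast; omega
    rw [if_pos h1, if_pos h]
    have ht1 : (2 * m + 1).toNat % 2 = 1 := by omega
    have ht2 : (2 * m + 1).toNat / 2 = m.toNat := by omega
    simp [ht1, ht2]
  · rw [if_neg, if_neg h]
    push_cast; omega

lemma extSeq_neg (N : ℕ) (b : ℕ → ℂ) (m : ℤ) :
    extSeq N (fun i => -b i) m = - extSeq N b m := by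
  unfold extSeq
  split <;> simp

/-- interleaving construction of a GCP of length `2N`. -/
theorem gcp_interleave (N : ℕ) (a b : ℕ → ℂ) (h : IsGCP N a b) :
    IsGCP (2 * N) (fun i => if i % 2 = 0 then a (i / 2) else b (i / 2))
      (fun i => if i % 2 = 0 then a (i / 2) else -b (i / 2)) := by
  intro s hs
  have hc_even := extSeq_interleave_even N a b
  have hc_odd := extSeq_interleave_odd N a b
  have hd_even : ∀ m : ℤ, extSeq (2 * N)
      (fun i => if i % 2 = 0 then a (i / 2) else -b (i / 2)) (2 * m) = extSeq N a m :=
    fun m => extSeq_interleave_even N a (fun i => -b i) m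
  have hd_odd : ∀ m : ℤ, extSeq (2 * N)
      (fun i => if i % 2 = 0 then a (i / 2) else -b (i / 2)) (2 * m + 1)
      = - extSeq N b m := by
    intro m
    rw [extSeq_interleave_odd N a (fun i => -b i) m, extSeq_neg]
  unfold aauto acorr
  rw [← Finset.sum_add_distrib, sum_range_two_mul]
  rcases Int.even_or_odd s with ⟨t, ht⟩ | ⟨t, ht⟩
  · -- s = 2t, t ≠ 0
    have hts : s = 2 * t := by omega
    have htne : t ≠ 0 := by omega
    have key : ∀ j ∈ Finset.range N,
        (extSeq (2*N) (fun i => if i % 2 = 0 then a (i / 2) else b (i / 2)) ↑(2*j) *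
          (starRingEnd ℂ) (extSeq (2*N) (fun i => if i % 2 = 0 then a (i / 2) else b (i / 2)) (↑(2*j) + s)) +
         extSeq (2*N) (fun i => if i % 2 = 0 then a (i / 2) else -b (i / 2)) ↑(2*j) *
          (starRingEnd ℂ) (extSeq (2*N) (fun i => if i % 2 = 0 then a (i / 2) else -b (i / 2)) (↑(2*j) + s))) +
        (extSeq (2*N) (fun i => if i % 2 = 0 then a (i / 2) else b (i / 2)) ↑(2*j+1) *
          (starRingEnd ℂ) (extSeq (2*N) (fun i => if i % 2 = 0 then a (i / 2) else b (i / 2)) (↑(2*j+1) + s)) +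
         extSeq (2*N) (fun i => if i % 2 = 0 then a (i / 2) else -b (i / 2)) ↑(2*j+1) *
          (starRingEnd ℂ) (extSeq (2*N) (fun i => if i % 2 = 0 then a (i / 2) else -b (i / 2)) (↑(2*j+1) + s)))
        = 2 * (extSeq N a ↑j * (starRingEnd ℂ) (extSeq N a (↑j + t)))
          + 2 * (extSeq N b ↑j * (starRingEnd ℂ) (extSeq N b (↑j + t))) := by
      intro j _
      have e1 : ((2*j : ℕ) : ℤ) = 2 * (j:ℤ) := by push_cast; ring
      have e2 : ((2*j : ℕ) : ℤ) + s = 2 * ((j:ℤ) + t) := by push_cast; omega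
      have e3 : ((2*j+1 : ℕ) : ℤ) = 2*(j:ℤ)+1 := by push_cast; ring
      have e4 : ((2*j+1 : ℕ) : ℤ) + s = 2*((j:ℤ)+t)+1 := by push_cast; omega
      rw [e2, e4, e1, e3, hc_even, hc_even, hc_odd, hc_odd, hd_even, hd_even, hd_odd, hd_odd]
      simp only [map_neg]
      ring
    rw [Finset.sum_congr rfl key, Finset.sum_add_distrib, ← Finset.mul_sum, ← Finset.mul_sum]
    have := h t htne
    unfold aauto acorr at this
    rw [← mul_add, this, mul_zero]
  · -- s = 2t+1
    apply Finset.sum_eq_zero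
    intro j _
    have e1 : ((2*j : ℕ) : ℤ) = 2 * (j:ℤ) := by push_cast; ring
    have e2 : ((2*j : ℕ) : ℤ) + s = 2 * ((j:ℤ) + t) + 1 := by push_cast; omega
    have e3 : ((2*j+1 : ℕ) : ℤ) = 2*(j:ℤ)+1 := by push_cast; ring
    have e4 : ((2*j+1 : ℕ) : ℤ) + s = 2*((j:ℤ)+t+1) := by push_cast; omega
    rw [e2, e4, e1, e3, hc_even, hc_odd, hc_odd, hc_even, hd_even, hd_odd, hd_odd, hd_even]
    simp only [map_neg]
    ring
end

section
/- A Golay sequence has PMEPR at most 2: if (a,b) is a GCP of length N with unimodular entries, then for every real θ, |sum_{k=0}^{N-1} a_k e^{i k θ}|^2 ≤ 2N. Equivalently, the peak-to-mean envelope power ratio of a is at most 2. -/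
/-!
Expanding `|S_a(θ)|² = S_a(θ) · conj S_a(θ)` and grouping the terms `a_j conj a_k e^{i(j-k)θ}`
by the shift `k - j` writes the power as `∑_s A_a(s) e^{-isθ}`. Adding the same identity for `b`,
every shift `s ≠ 0` cancels by the Golay property, leaving `|S_a(θ)|² + |S_b(θ)|² = A_a(0) + A_b(0)
= 2N`.
-/

open Finset Complex

open ComplexConjugate

lemma extSeq_natCast_of_lt {N k : ℕ} (d : ℕ → ℂ) (hk : k < N) : extSeq N d k = d k := by
  simp [extSeq, hk]

lemma aauto_eq_sum_filter_sub_eq (N : ℕ) (d : ℕ → ℂ) (s : ℤ) :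
    aauto N d s = ∑ p ∈ (range N ×ˢ range N).filter (fun p => (p.2 : ℤ) - p.1 = s),
      d p.1 * conj (d p.2) := by
  rw [sum_filter, sum_product, aauto, acorr]
  refine sum_congr rfl fun j hj => ?_
  rw [extSeq_natCast_of_lt d (mem_range.1 hj)]
  by_cases hs : 0 ≤ (j : ℤ) + s ∧ (j : ℤ) + s < N
  · obtain ⟨m, hm⟩ := Int.eq_ofNat_of_zero_le hs.1
    have hmN : m < N := by omega
    rw [hm, extSeq_natCast_of_lt d hmN, sum_eq_single_of_mem m (mem_range.2 hmN)
      fun k _ hkm => if_neg (by omega), if_pos (by omega)]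
  · rw [extSeq, if_neg hs, map_zero, mul_zero]
    exact (sum_eq_zero fun k hk => if_neg (by simp only [mem_range] at hk; omega)).symm

lemma aauto_zero_of_norm_eq_one {N : ℕ} {d : ℕ → ℂ} (hd : ∀ k < N, ‖d k‖ = 1) :
    aauto N d 0 = N := by
  rw [aauto, acorr]
  have hterm : ∀ k ∈ range N, extSeq N d k * conj (extSeq N d (k + 0)) = 1 := by
    intro k hk
    have hkN := mem_range.1 hk
    rw [add_zero, extSeq_natCast_of_lt d hkN, mul_conj, normSq_eq_norm_sq, hd k hkN]
    norm_num
  rw [sum_congr rfl hterm, sum_const, card_range, nsmul_one]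

lemma sq_norm_sum_mul_exp_eq_sum_aauto (N : ℕ) (d : ℕ → ℂ) (θ : ℝ) :
    ((‖∑ k ∈ range N, d k * exp (I * k * θ)‖ ^ 2 : ℝ) : ℂ) =
      ∑ s ∈ Icc (-(N : ℤ)) N, exp (-(I * s * θ)) * aauto N d s := by
  have hconj : ∀ k : ℕ, conj (exp (I * k * θ)) = exp (-(I * k * θ)) := fun k => by
    rw [← exp_conj, map_mul, map_mul, conj_I, conj_natCast, conj_ofReal]
    ring_nf
  have hshift : ∀ p ∈ range N ×ˢ range N, ((p.2 : ℤ) - p.1) ∈ Icc (-(N : ℤ)) N := by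
    intro p hp
    simp only [mem_product, mem_range] at hp
    simp only [mem_Icc]
    omega
  rw [ofReal_pow, ← mul_conj', map_sum, sum_mul_sum, ← sum_product',
    ← sum_fiberwise_of_maps_to hshift]
  refine sum_congr rfl fun s _ => ?_
  rw [aauto_eq_sum_filter_sub_eq, mul_sum]
  refine sum_congr rfl fun p hp => ?_
  have hps : ((p.2 : ℤ) - p.1 : ℂ) = s := by exact_mod_cast (mem_filter.1 hp).2
  rw [map_mul, hconj, ← hps]
  calc d p.1 * exp (I * p.1 * θ) * (conj (d p.2) * exp (-(I * p.2 * θ)))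
      = exp (I * p.1 * θ + -(I * p.2 * θ)) * (d p.1 * conj (d p.2)) := by
        rw [exp_add]; ring
    _ = _ := by push_cast; ring_nf

theorem IsGCP.sq_norm_add_sq_norm {N : ℕ} {a b : ℕ → ℂ}
    (ha : ∀ k < N, ‖a k‖ = 1) (hb : ∀ k < N, ‖b k‖ = 1) (h : IsGCP N a b) (θ : ℝ) :
    ‖∑ k ∈ range N, a k * exp (I * k * θ)‖ ^ 2 + ‖∑ k ∈ range N, b k * exp (I * k * θ)‖ ^ 2 =
      2 * N := by
  apply ofReal_injective
  rw [ofReal_add, sq_norm_sum_mul_exp_eq_sum_aauto, sq_norm_sum_mul_exp_eq_sum_aauto,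
    ← sum_add_distrib]
  simp_rw [← mul_add]
  rw [sum_eq_single_of_mem 0 (by simp) fun s _ hs => by rw [h s hs, mul_zero],
    aauto_zero_of_norm_eq_one ha, aauto_zero_of_norm_eq_one hb, Int.cast_zero, mul_zero,
    zero_mul, neg_zero, exp_zero, one_mul]
  push_cast
  ring

/-- a Golay sequence has PMEPR at most 2: for a unimodular GCP `(a,b)`
of length `N`, `|∑_k a_k e^{ikθ}|² ≤ 2N` for every real `θ`. -/
theorem golay_pmepr_le_two (N : ℕ) (a b : ℕ → ℂ)
    (ha : ∀ k < N, ‖a k‖ = 1)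
    (hb : ∀ k < N, ‖b k‖ = 1)
    (h : IsGCP N a b) (θ : ℝ) :
    (‖(∑ k ∈ Finset.range N,
        a k * Complex.exp (Complex.I * k * θ))‖) ^ 2 ≤ 2 * N := by
  linarith [h.sq_norm_add_sq_norm ha hb θ, sq_nonneg ‖∑ k ∈ range N, b k * exp (I * k * θ)‖]
end
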